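/- Let u : ℝ^{1+n} → ℂ be smooth satisfying □₃(u^k) := ∂₀³(u^k) − Σⱼ∂ⱼ³(u^k) = 0 for k = 1, 2, 3. Then for any C³ function f(u,ū), the current V_{3,μ}(f) = ∂_μ²u · f_u + (∂_μu)² f_{uu} − ∂_μu ∂_μū f_{uū} + ∂_μ²ū · f_ū + (∂_μū)² f_{ūū} satisfies the conservation law ∂₀ V_{3,0}(f) − Σ_{j=1}^n ∂_j V_{3,j}(f) = 0. -/

import Mathlib

/-- Partial derivative in the μ-th coordinate direction. -/
noncomputable def pd {n : ℕ} (μ : Fin (n+1)) (u : (Fin (n+1) → ℝ) → ℂ) :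
    (Fin (n+1) → ℝ) → ℂ :=
  fun x => fderiv ℝ u x (Pi.single μ 1)

/-- The third-order operator □₃ = ∂₀³ − Σⱼ ∂ⱼ³ on ℝ^{1+n}. -/
noncomputable def box3 {n : ℕ} (u : (Fin (n+1) → ℝ) → ℂ) :
    (Fin (n+1) → ℝ) → ℂ :=
  fun x => (pd 0)^[3] u x - ∑ j : Fin n, (pd j.succ)^[3] u x

/-- Wirtinger derivative ∂F/∂z of F : ℂ → ℂ viewed as a real-differentiable map. -/
noncomputable def w1 (F : ℂ → ℂ) : ℂ → ℂ :=
  fun z => (fderiv ℝ F z 1 - Complex.I * fderiv ℝ F z Complex.I) / 2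

/-- Wirtinger derivative ∂F/∂z̄ of F : ℂ → ℂ. -/
noncomputable def w1bar (F : ℂ → ℂ) : ℂ → ℂ :=
  fun z => (fderiv ℝ F z 1 + Complex.I * fderiv ℝ F z Complex.I) / 2

section tools
variable {n : ℕ}

private lemma contDiff_pd {m : WithTop ℕ∞} {g : (Fin (n+1) → ℝ) → ℂ}
    (hg : ContDiff ℝ (m+1) g) (μ : Fin (n+1)) : ContDiff ℝ m (pd μ g) :=
  (hg.fderiv_right le_rfl).clm_apply contDiff_const

private lemma pd_add (μ : Fin (n+1)) {g h : (Fin (n+1) → ℝ) → ℂ} {x}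
    (hg : DifferentiableAt ℝ g x) (hh : DifferentiableAt ℝ h x) :
    pd μ (fun y => g y + h y) x = pd μ g x + pd μ h x := by
  unfold pd; rw [fderiv_fun_add hg hh]; rfl

private lemma pd_sub (μ : Fin (n+1)) {g h : (Fin (n+1) → ℝ) → ℂ} {x}
    (hg : DifferentiableAt ℝ g x) (hh : DifferentiableAt ℝ h x) :
    pd μ (fun y => g y - h y) x = pd μ g x - pd μ h x := by
  unfold pd; rw [fderiv_fun_sub hg hh]; rfl

private lemma pd_const_mul (μ : Fin (n+1)) {g : (Fin (n+1) → ℝ) → ℂ} {x} (c : ℂ)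
    (hg : DifferentiableAt ℝ g x) :
    pd μ (fun y => c * g y) x = c * pd μ g x := by
  unfold pd; rw [fderiv_const_mul hg]; rfl

private lemma pd_mul (μ : Fin (n+1)) {g h : (Fin (n+1) → ℝ) → ℂ} {x}
    (hg : DifferentiableAt ℝ g x) (hh : DifferentiableAt ℝ h x) :
    pd μ (fun y => g y * h y) x = pd μ g x * h x + g x * pd μ h x := by
  unfold pd; rw [fderiv_fun_mul hg hh]
  simp [smul_eq_mul]; ring

private lemma pd_conj (μ : Fin (n+1)) (g : (Fin (n+1) → ℝ) → ℂ) (x) :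
    pd μ (fun y => (starRingEnd ℂ) (g y)) x = (starRingEnd ℂ) (pd μ g x) := by
  unfold pd
  have h : (fun y => (starRingEnd ℂ) (g y)) = (Complex.conjCLE : ℂ ≃L[ℝ] ℂ) ∘ g := rfl
  rw [h, ContinuousLinearEquiv.comp_fderiv]; rfl

private lemma clm_decomp (T : ℂ →L[ℝ] ℂ) (h : ℂ) :
    T h = h * ((T 1 - Complex.I * T Complex.I)/2)
        + (starRingEnd ℂ) h * ((T 1 + Complex.I * T Complex.I)/2) := by
  have h3 : h = (h.re : ℂ) + (h.im : ℂ) * Complex.I := (Complex.re_add_im h).symm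
  have h1 : T h = (h.re : ℂ) * T 1 + (h.im : ℂ) * T Complex.I := by
    conv_lhs => rw [h3]
    have e : ((h.re : ℂ) + (h.im : ℂ) * Complex.I : ℂ) = h.re • (1:ℂ) + h.im • Complex.I := by
      simp [Complex.real_smul]
    rw [e, map_add, map_smul, map_smul]
    simp [Complex.real_smul]
  have h2 : (starRingEnd ℂ) h = (h.re:ℂ) - (h.im : ℂ) * Complex.I := by
    apply Complex.ext <;> simp
  rw [h1, h2]
  nth_rewrite 3 [h3]
  linear_combination (h.im:ℂ) * T Complex.I * Complex.I_sq

private lemma pd_comp (μ : Fin (n+1)) {F : ℂ → ℂ} {g : (Fin (n+1) → ℝ) → ℂ} {x}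
    (hF : DifferentiableAt ℝ F (g x)) (hg : DifferentiableAt ℝ g x) :
    pd μ (fun y => F (g y)) x
      = pd μ g x * w1 F (g x) + (starRingEnd ℂ) (pd μ g x) * w1bar F (g x) := by
  have e : pd μ (fun y => F (g y)) x = (fderiv ℝ F (g x)) (pd μ g x) := by
    unfold pd
    rw [show (fun y => F (g y)) = F ∘ g from rfl, fderiv_comp x hF hg]; rfl
  rw [e, clm_decomp]; rfl

private lemma contDiff_w1 {m : WithTop ℕ∞} {F : ℂ → ℂ} (hF : ContDiff ℝ (m+1) F) :
    ContDiff ℝ m (w1 F) := by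
  unfold w1
  exact (((hF.fderiv_right le_rfl).clm_apply contDiff_const).sub
    (contDiff_const.mul ((hF.fderiv_right le_rfl).clm_apply contDiff_const))).div_const 2

private lemma contDiff_w1bar {m : WithTop ℕ∞} {F : ℂ → ℂ} (hF : ContDiff ℝ (m+1) F) :
    ContDiff ℝ m (w1bar F) := by
  unfold w1bar
  exact (((hF.fderiv_right le_rfl).clm_apply contDiff_const).add
    (contDiff_const.mul ((hF.fderiv_right le_rfl).clm_apply contDiff_const))).div_const 2

private lemma fderiv_w1 {F : ℂ → ℂ} (hF : ContDiff ℝ 2 F) (z h : ℂ) :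
    fderiv ℝ (w1 F) z h
      = (fderiv ℝ (fderiv ℝ F) z h 1 - Complex.I * fderiv ℝ (fderiv ℝ F) z h Complex.I) / 2 := by
  have hd : DifferentiableAt ℝ (fderiv ℝ F) z :=
    ((hF.fderiv_right (le_refl ((1:ℕ) + 1 : WithTop ℕ∞))).differentiable (by norm_num)).differentiableAt
  have hA : ∀ v : ℂ, DifferentiableAt ℝ (fun w => fderiv ℝ F w v) z :=
    fun v => hd.clm_apply (differentiableAt_const v)
  have key : ∀ v : ℂ, fderiv ℝ (fun w => fderiv ℝ F w v) z
      = (fderiv ℝ (fderiv ℝ F) z).flip v := by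
    intro v
    rw [fderiv_clm_apply hd (differentiableAt_const v)]
    ext h; simp
  have e : w1 F = fun w =>
      (2:ℂ)⁻¹ * ((fun w => fderiv ℝ F w 1) w - Complex.I * (fun w => fderiv ℝ F w Complex.I) w) := by
    funext w; simp [w1]; ring
  rw [e, fderiv_const_mul (((hA 1).fun_sub ((differentiableAt_const Complex.I).fun_mul (hA Complex.I))))]
  simp only [ContinuousLinearMap.smul_apply]
  rw [fderiv_fun_sub (hA 1) ((differentiableAt_const Complex.I).fun_mul (hA Complex.I)),
    fderiv_const_mul (hA Complex.I)]
  simp only [ContinuousLinearMap.sub_apply, ContinuousLinearMap.smul_apply, key, smul_eq_mul,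
    ContinuousLinearMap.flip_apply]
  ring

private lemma fderiv_w1bar {F : ℂ → ℂ} (hF : ContDiff ℝ 2 F) (z h : ℂ) :
    fderiv ℝ (w1bar F) z h
      = (fderiv ℝ (fderiv ℝ F) z h 1 + Complex.I * fderiv ℝ (fderiv ℝ F) z h Complex.I) / 2 := by
  have hd : DifferentiableAt ℝ (fderiv ℝ F) z :=
    ((hF.fderiv_right (le_refl ((1:ℕ) + 1 : WithTop ℕ∞))).differentiable (by norm_num)).differentiableAt
  have hA : ∀ v : ℂ, DifferentiableAt ℝ (fun w => fderiv ℝ F w v) z :=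
    fun v => hd.clm_apply (differentiableAt_const v)
  have key : ∀ v : ℂ, fderiv ℝ (fun w => fderiv ℝ F w v) z
      = (fderiv ℝ (fderiv ℝ F) z).flip v := by
    intro v
    rw [fderiv_clm_apply hd (differentiableAt_const v)]
    ext h; simp
  have e : w1bar F = fun w =>
      (2:ℂ)⁻¹ * ((fun w => fderiv ℝ F w 1) w + Complex.I * (fun w => fderiv ℝ F w Complex.I) w) := by
    funext w; simp [w1bar]; ring
  rw [e, fderiv_const_mul (((hA 1).fun_add ((differentiableAt_const Complex.I).fun_mul (hA Complex.I))))]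
  simp only [ContinuousLinearMap.smul_apply]
  rw [fderiv_fun_add (hA 1) ((differentiableAt_const Complex.I).fun_mul (hA Complex.I)),
    fderiv_const_mul (hA Complex.I)]
  simp only [ContinuousLinearMap.add_apply, ContinuousLinearMap.smul_apply, key, smul_eq_mul,
    ContinuousLinearMap.flip_apply]
  ring

private lemma w_comm {F : ℂ → ℂ} (hF : ContDiff ℝ 2 F) (z : ℂ) :
    w1bar (w1 F) z = w1 (w1bar F) z := by
  have hs : fderiv ℝ (fderiv ℝ F) z 1 Complex.I = fderiv ℝ (fderiv ℝ F) z Complex.I 1 :=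
    (hF.contDiffAt.isSymmSndFDerivAt (by simp [minSmoothness_of_isRCLikeNormedField])) 1 Complex.I
  simp only [w1bar, w1] at *
  rw [fderiv_w1 hF z 1, fderiv_w1 hF z Complex.I, fderiv_w1bar hF z 1, fderiv_w1bar hF z Complex.I]
  linear_combination (-Complex.I/2) * hs

end tools
section boxlemmas
variable {n : ℕ}

private lemma pd3_sq (u : (Fin (n+1) → ℝ) → ℂ) (hu : ContDiff ℝ (⊤ : ℕ∞) u)
    (μ : Fin (n+1)) (x : Fin (n+1) → ℝ) :
    pd μ (pd μ (pd μ (fun y => u y * u y))) x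
      = 2 * u x * pd μ (pd μ (pd μ u)) x + 6 * (pd μ u x * pd μ (pd μ u) x) := by
  have hum : ∀ m : ℕ, ContDiff ℝ m u := fun m => hu.of_le (by exact_mod_cast le_top)
  have hU1 : ∀ m : ℕ, ContDiff ℝ m (pd μ u) := fun m =>
    contDiff_pd (by exact_mod_cast hum (m+1)) μ
  have hU2 : ∀ m : ℕ, ContDiff ℝ m (pd μ (pd μ u)) := fun m =>
    contDiff_pd (by exact_mod_cast hU1 (m+1)) μ
  have du : Differentiable ℝ u := (hum 1).differentiable (by norm_num)
  have dU1 : Differentiable ℝ (pd μ u) := (hU1 1).differentiable (by norm_num)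
  have dU2 : Differentiable ℝ (pd μ (pd μ u)) := (hU2 1).differentiable (by norm_num)
  have e1 : pd μ (fun y => u y * u y) = fun y => pd μ u y * u y + u y * pd μ u y :=
    funext fun y => pd_mul μ (du y) (du y)
  rw [e1]
  have e2 : pd μ (fun y => pd μ u y * u y + u y * pd μ u y)
      = fun y => (pd μ (pd μ u) y * u y + pd μ u y * pd μ u y)
          + (pd μ u y * pd μ u y + u y * pd μ (pd μ u) y) := by
    funext y
    rw [pd_add μ ((dU1 y).fun_mul (du y)) ((du y).fun_mul (dU1 y)),
        pd_mul μ (dU1 y) (du y), pd_mul μ (du y) (dU1 y)]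
  rw [e2]
  rw [pd_add μ (((dU2 x).fun_mul (du x)).fun_add ((dU1 x).fun_mul (dU1 x)))
        (((dU1 x).fun_mul (dU1 x)).fun_add ((du x).fun_mul (dU2 x))),
      pd_add μ ((dU2 x).fun_mul (du x)) ((dU1 x).fun_mul (dU1 x)),
      pd_add μ ((dU1 x).fun_mul (dU1 x)) ((du x).fun_mul (dU2 x)),
      pd_mul μ (dU2 x) (du x), pd_mul μ (dU1 x) (dU1 x), pd_mul μ (du x) (dU2 x)]
  ring

private lemma pd3_cube (u : (Fin (n+1) → ℝ) → ℂ) (hu : ContDiff ℝ (⊤ : ℕ∞) u)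
    (μ : Fin (n+1)) (x : Fin (n+1) → ℝ) :
    pd μ (pd μ (pd μ (fun y => u y * (u y * u y)))) x
      = 3 * (u x * u x) * pd μ (pd μ (pd μ u)) x
        + 18 * u x * (pd μ u x * pd μ (pd μ u) x) + 6 * (pd μ u x)^3 := by
  have hum : ∀ m : ℕ, ContDiff ℝ m u := fun m => hu.of_le (by exact_mod_cast le_top)
  have hU1 : ∀ m : ℕ, ContDiff ℝ m (pd μ u) := fun m =>
    contDiff_pd (by exact_mod_cast hum (m+1)) μ
  have hU2 : ∀ m : ℕ, ContDiff ℝ m (pd μ (pd μ u)) := fun m =>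
    contDiff_pd (by exact_mod_cast hU1 (m+1)) μ
  have du : Differentiable ℝ u := (hum 1).differentiable (by norm_num)
  have dU1 : Differentiable ℝ (pd μ u) := (hU1 1).differentiable (by norm_num)
  have dU2 : Differentiable ℝ (pd μ (pd μ u)) := (hU2 1).differentiable (by norm_num)
  have e1 : pd μ (fun y => u y * (u y * u y))
      = fun y => pd μ u y * (u y * u y)
          + u y * (pd μ u y * u y + u y * pd μ u y) := by
    funext y
    rw [pd_mul μ (du y) ((du y).fun_mul (du y)), pd_mul μ (du y) (du y)]
  have e1' : (fun y => pd μ u y * (u y * u y) + u y * (pd μ u y * u y + u y * pd μ u y))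
      = fun y => 3 * (u y * (u y * pd μ u y)) := funext fun y => by ring
  rw [e1, e1']
  have e2 : pd μ (fun y => 3 * (u y * (u y * pd μ u y)))
      = fun y => 3 * (pd μ u y * (u y * pd μ u y)
          + u y * (pd μ u y * pd μ u y + u y * pd μ (pd μ u) y)) := by
    funext y
    rw [pd_const_mul μ 3 ((du y).fun_mul ((du y).fun_mul (dU1 y))),
        pd_mul μ (du y) ((du y).fun_mul (dU1 y)), pd_mul μ (du y) (dU1 y)]
  have e2' : (fun y => 3 * (pd μ u y * (u y * pd μ u y)
          + u y * (pd μ u y * pd μ u y + u y * pd μ (pd μ u) y)))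
      = fun y => 3 * (u y * (u y * pd μ (pd μ u) y)) + 6 * (u y * (pd μ u y * pd μ u y)) :=
    funext fun y => by ring
  rw [e2, e2']
  rw [pd_add μ
        (by exact (differentiableAt_const (3:ℂ)).fun_mul ((du x).fun_mul ((du x).fun_mul (dU2 x))))
        (by exact (differentiableAt_const (6:ℂ)).fun_mul ((du x).fun_mul ((dU1 x).fun_mul (dU1 x)))),
      pd_const_mul μ 3 ((du x).fun_mul ((du x).fun_mul (dU2 x))),
      pd_const_mul μ 6 ((du x).fun_mul ((dU1 x).fun_mul (dU1 x))),
      pd_mul μ (du x) ((du x).fun_mul (dU2 x)),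
      pd_mul μ (du x) (dU2 x),
      pd_mul μ (du x) ((dU1 x).fun_mul (dU1 x)),
      pd_mul μ (dU1 x) (dU1 x)]
  ring

end boxlemmas
section keyformula
variable {n : ℕ}

private lemma key_formula (u : (Fin (n+1) → ℝ) → ℂ) (hu : ContDiff ℝ (⊤ : ℕ∞) u)
    (f : ℂ → ℂ) (hf : ContDiff ℝ 3 f) (μ : Fin (n+1)) (x : Fin (n+1) → ℝ) :
    pd μ (fun y =>
      pd μ (pd μ u) y * w1 f (u y)
        + (pd μ u y)^2 * w1 (w1 f) (u y)
        - pd μ u y * pd μ (fun y' => starRingEnd ℂ (u y')) y * w1 (w1bar f) (u y)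
        + pd μ (pd μ (fun y' => starRingEnd ℂ (u y'))) y * w1bar f (u y)
        + (pd μ (fun y' => starRingEnd ℂ (u y')) y)^2 * w1bar (w1bar f) (u y)) x
    = w1 f (u x) * pd μ (pd μ (pd μ u)) x
      + w1bar f (u x) * (starRingEnd ℂ) (pd μ (pd μ (pd μ u)) x)
      + 3 * w1 (w1 f) (u x) * (pd μ u x * pd μ (pd μ u) x)
      + 3 * w1bar (w1bar f) (u x) * (starRingEnd ℂ) (pd μ u x * pd μ (pd μ u) x)
      + w1 (w1 (w1 f)) (u x) * (pd μ u x)^3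
      + w1bar (w1bar (w1bar f)) (u x) * (starRingEnd ℂ) ((pd μ u x)^3) := by
  have hum : ∀ m : ℕ, ContDiff ℝ m u := fun m => hu.of_le (by exact_mod_cast le_top)
  have hU1 : ∀ m : ℕ, ContDiff ℝ m (pd μ u) := fun m =>
    contDiff_pd (by exact_mod_cast hum (m+1)) μ
  have hU2 : ∀ m : ℕ, ContDiff ℝ m (pd μ (pd μ u)) := fun m =>
    contDiff_pd (by exact_mod_cast hU1 (m+1)) μ
  have du : Differentiable ℝ u := (hum 1).differentiable (by norm_num)
  have dU1 : Differentiable ℝ (pd μ u) := (hU1 1).differentiable (by norm_num)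
  have dU2 : Differentiable ℝ (pd μ (pd μ u)) := (hU2 1).differentiable (by norm_num)
  have hf2 : ContDiff ℝ 2 f := hf.of_le (by norm_num)
  have hw1f : ContDiff ℝ 2 (w1 f) := contDiff_w1 (m := 2) (hf.of_le (by norm_num))
  have hw2f : ContDiff ℝ 2 (w1bar f) := contDiff_w1bar (m := 2) (hf.of_le (by norm_num))
  have hw11 : ContDiff ℝ 1 (w1 (w1 f)) := contDiff_w1 (m := 1) (hw1f.of_le (by norm_num))
  have hw12 : ContDiff ℝ 1 (w1 (w1bar f)) := contDiff_w1 (m := 1) (hw2f.of_le (by norm_num))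
  have hw22 : ContDiff ℝ 1 (w1bar (w1bar f)) := contDiff_w1bar (m := 1) (hw2f.of_le (by norm_num))
  have dconj : ∀ {g : (Fin (n+1) → ℝ) → ℂ}, Differentiable ℝ g →
      Differentiable ℝ (fun y => (starRingEnd ℂ) (g y)) := fun hg =>
    (Complex.conjCLE : ℂ ≃L[ℝ] ℂ).differentiable.comp hg
  -- rewrite conjugate derivatives
  have hconj1 : pd μ (fun y => (starRingEnd ℂ) (u y)) = fun y => (starRingEnd ℂ) (pd μ u y) :=
    funext fun y => pd_conj μ u y
  have hconj1' : pd μ (fun y => (starRingEnd ℂ) (pd μ u y))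
      = fun y => (starRingEnd ℂ) (pd μ (pd μ u) y) :=
    funext fun y => pd_conj μ (pd μ u) y
  simp only [hconj1, hconj1', pow_two]
  -- differentiability of the composed factors
  have dw1f : Differentiable ℝ (fun y => w1 f (u y)) :=
    ((hw1f.differentiable (by norm_num)).comp du)
  have dw2f : Differentiable ℝ (fun y => w1bar f (u y)) :=
    ((hw2f.differentiable (by norm_num)).comp du)
  have dw11 : Differentiable ℝ (fun y => w1 (w1 f) (u y)) :=
    ((hw11.differentiable (by norm_num)).comp du)
  have dw12 : Differentiable ℝ (fun y => w1 (w1bar f) (u y)) :=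
    ((hw12.differentiable (by norm_num)).comp du)
  have dw22 : Differentiable ℝ (fun y => w1bar (w1bar f) (u y)) :=
    ((hw22.differentiable (by norm_num)).comp du)
  have d1 : DifferentiableAt ℝ (fun y => pd μ (pd μ u) y * w1 f (u y)) x := (dU2 x).fun_mul (dw1f x)
  have d2 : DifferentiableAt ℝ (fun y => pd μ u y * pd μ u y * w1 (w1 f) (u y)) x :=
    ((dU1 x).fun_mul (dU1 x)).fun_mul (dw11 x)
  have d3 : DifferentiableAt ℝ
      (fun y => pd μ u y * (starRingEnd ℂ) (pd μ u y) * w1 (w1bar f) (u y)) x :=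
    ((dU1 x).fun_mul (dconj dU1 x)).fun_mul (dw12 x)
  have d4 : DifferentiableAt ℝ (fun y => (starRingEnd ℂ) (pd μ (pd μ u) y) * w1bar f (u y)) x :=
    (dconj dU2 x).fun_mul (dw2f x)
  have d5 : DifferentiableAt ℝ
      (fun y => (starRingEnd ℂ) (pd μ u y) * (starRingEnd ℂ) (pd μ u y) * w1bar (w1bar f) (u y)) x :=
    ((dconj dU1 x).fun_mul (dconj dU1 x)).fun_mul (dw22 x)
  rw [pd_add μ (((d1.fun_add d2).fun_sub d3).fun_add d4) d5, pd_add μ ((d1.fun_add d2).fun_sub d3) d4,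
      pd_sub μ (d1.fun_add d2) d3, pd_add μ d1 d2]
  -- the five individual terms
  rw [pd_mul μ (dU2 x) (dw1f x),
      pd_comp μ ((hw1f.differentiable (by norm_num)) (u x)) (du x)]
  rw [pd_mul μ ((dU1 x).fun_mul (dU1 x)) (dw11 x), pd_mul μ (dU1 x) (dU1 x),
      pd_comp μ ((hw11.differentiable (by norm_num)) (u x)) (du x)]
  rw [pd_mul μ ((dU1 x).fun_mul (dconj dU1 x)) (dw12 x), pd_mul μ (dU1 x) (dconj dU1 x),
      pd_conj μ (pd μ u) x,
      pd_comp μ ((hw12.differentiable (by norm_num)) (u x)) (du x)]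
  rw [pd_mul μ (dconj dU2 x) (dw2f x), pd_conj μ (pd μ (pd μ u)) x,
      pd_comp μ ((hw2f.differentiable (by norm_num)) (u x)) (du x)]
  rw [pd_mul μ ((dconj dU1 x).fun_mul (dconj dU1 x)) (dw22 x),
      pd_mul μ (dconj dU1 x) (dconj dU1 x), pd_conj μ (pd μ u) x,
      pd_comp μ ((hw22.differentiable (by norm_num)) (u x)) (du x)]
  -- commutation of mixed Wirtinger derivatives
  have cfun : w1bar (w1 f) = w1 (w1bar f) := funext (w_comm hf2)
  have c2 : w1bar (w1 (w1 f)) (u x) = w1 (w1 (w1bar f)) (u x) := by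
    rw [w_comm hw1f (u x), cfun]
  have c3 : w1bar (w1 (w1bar f)) (u x) = w1 (w1bar (w1bar f)) (u x) := w_comm hw2f (u x)
  rw [c2, c3, cfun]
  simp only [map_mul, map_pow]
  ring

theorem stmt16 {n : ℕ} (u : (Fin (n+1) → ℝ) → ℂ)
    (hu : ContDiff ℝ (⊤ : ℕ∞) u)
    (heqs : ∀ k : ℕ, 1 ≤ k → k ≤ 3 → ∀ x, box3 (fun y => (u y)^k) x = 0)
    (f : ℂ → ℂ) (hf : ContDiff ℝ 3 f)
    (V : Fin (n+1) → (Fin (n+1) → ℝ) → ℂ)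
    (hV : V = fun μ x =>
      pd μ (pd μ u) x * w1 f (u x)
        + (pd μ u x)^2 * w1 (w1 f) (u x)
        - pd μ u x * pd μ (fun y => starRingEnd ℂ (u y)) x * w1 (w1bar f) (u x)
        + pd μ (pd μ (fun y => starRingEnd ℂ (u y))) x * w1bar f (u x)
        + (pd μ (fun y => starRingEnd ℂ (u y)) x)^2 * w1bar (w1bar f) (u x)) :
    ∀ x, pd 0 (V 0) x - ∑ l : Fin n, pd l.succ (V l.succ) x = 0 := by
  intro x
  have it3 : ∀ (g : ((Fin (n+1) → ℝ) → ℂ) → ((Fin (n+1) → ℝ) → ℂ)) (a), g^[3] a = g (g (g a)) :=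
    fun g a => rfl
  have hone : (fun y => (u y)^1) = u := funext fun y => pow_one _
  have hsq : (fun y => (u y)^2) = fun y => u y * u y := funext fun y => by ring
  have hcube : (fun y => (u y)^3) = fun y => u y * (u y * u y) := funext fun y => by ring
  -- the three conservation identities
  have h1 : pd 0 (pd 0 (pd 0 u)) x
      - ∑ j : Fin n, pd j.succ (pd j.succ (pd j.succ u)) x = 0 := by
    have e := heqs 1 (by norm_num) (by norm_num) x
    simp only [box3, it3, hone] at e
    exact e
  have h2 : pd 0 u x * pd 0 (pd 0 u) x
      - ∑ j : Fin n, pd j.succ u x * pd j.succ (pd j.succ u) x = 0 := by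
    have e := heqs 2 (by norm_num) (by norm_num) x
    simp only [box3, it3, hsq] at e
    rw [pd3_sq u hu 0 x,
        Finset.sum_congr rfl (fun j _ => pd3_sq u hu j.succ x),
        Finset.sum_add_distrib, ← Finset.mul_sum, ← Finset.mul_sum] at e
    linear_combination e / 6 - (u x / 3) * h1
  have h3 : (pd 0 u x)^3 - ∑ j : Fin n, (pd j.succ u x)^3 = 0 := by
    have e := heqs 3 (by norm_num) (by norm_num) x
    simp only [box3, it3, hcube] at e
    rw [pd3_cube u hu 0 x,
        Finset.sum_congr rfl (fun j _ => pd3_cube u hu j.succ x),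
        Finset.sum_add_distrib, Finset.sum_add_distrib,
        ← Finset.mul_sum, ← Finset.mul_sum, ← Finset.mul_sum] at e
    linear_combination e / 6 - (u x * u x / 2) * h1 - (3 * u x) * h2
  -- conjugated versions
  have h1c : (starRingEnd ℂ) (pd 0 (pd 0 (pd 0 u)) x)
      - ∑ j : Fin n, (starRingEnd ℂ) (pd j.succ (pd j.succ (pd j.succ u)) x) = 0 := by
    simpa only [map_sub, map_sum, map_zero] using congrArg (starRingEnd ℂ) h1
  have h2c : (starRingEnd ℂ) (pd 0 u x * pd 0 (pd 0 u) x)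
      - ∑ j : Fin n, (starRingEnd ℂ) (pd j.succ u x * pd j.succ (pd j.succ u) x) = 0 := by
    simpa only [map_sub, map_sum, map_zero] using congrArg (starRingEnd ℂ) h2
  have h3c : (starRingEnd ℂ) ((pd 0 u x)^3)
      - ∑ j : Fin n, (starRingEnd ℂ) ((pd j.succ u x)^3) = 0 := by
    simpa only [map_sub, map_sum, map_zero] using congrArg (starRingEnd ℂ) h3
  simp only [hV]
  rw [key_formula u hu f hf 0 x,
      Finset.sum_congr rfl (fun l _ => key_formula u hu f hf l.succ x),
      Finset.sum_add_distrib, Finset.sum_add_distrib, Finset.sum_add_distrib,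
      Finset.sum_add_distrib, Finset.sum_add_distrib,
      ← Finset.mul_sum, ← Finset.mul_sum, ← Finset.mul_sum,
      ← Finset.mul_sum, ← Finset.mul_sum, ← Finset.mul_sum]
  linear_combination (w1 f (u x)) * h1 + (w1bar f (u x)) * h1c
    + (3 * w1 (w1 f) (u x)) * h2 + (3 * w1bar (w1bar f) (u x)) * h2c
    + (w1 (w1 (w1 f)) (u x)) * h3 + (w1bar (w1bar (w1bar f)) (u x)) * h3c
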